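/- With R(N) := 2^{3 − 2/N − N} π^{−3/2 − 1/N} · Γ(N−2) · (Γ(N)/Γ(N/2))^{2/N} · Γ((N+1)/2)^{−1 + 2/N} / ( N(N−2) Γ(N/2 − 2) ), defined for natural numbers N ≥ 5, one has lim_{N→∞} R(N) = 1/(π² e²). -/

import Mathlib

open Real Filter

/-- The quantity
`R(N) = 2^{3−2/N−N} π^{−3/2−1/N} Γ(N−2) (Γ(N)/Γ(N/2))^{2/N} Γ((N+1)/2)^{−1+2/N}
        / (N(N−2)Γ(N/2−2))`. -/
noncomputable def Rquant (N : ℕ) : ℝ :=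
  2 ^ (3 - 2 / (N : ℝ) - N) * π ^ (-(3 : ℝ) / 2 - 1 / N) *
    Real.Gamma ((N : ℝ) - 2) *
    (Real.Gamma (N : ℝ) / Real.Gamma ((N : ℝ) / 2)) ^ ((2 : ℝ) / N) *
    Real.Gamma (((N : ℝ) + 1) / 2) ^ (-1 + (2 : ℝ) / N) /
    ((N : ℝ) * ((N : ℝ) - 2) * Real.Gamma ((N : ℝ) / 2 - 2))

section Aux

open Topology

/-- Simplified logarithmic form of `Rquant`. -/
noncomputable def Mfun (N : ℕ) : ℝ :=
  -2 * log π + (-2/(N:ℝ)) * log 2 + (-1/(N:ℝ)) * log π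
  + (log ((N:ℝ)-4) - log (N:ℝ) - log ((N:ℝ)-1) - log ((N:ℝ)-2))
  + (2/(N:ℝ)) * log (Real.Gamma (N:ℝ))
  + (2/(N:ℝ)) * (log (Real.Gamma (((N:ℝ)+1)/2)) - log (Real.Gamma ((N:ℝ)/2)))

/-- Limit-friendly form of `Mfun`. -/
noncomputable def Ffun (N : ℕ) : ℝ :=
  -2 * log π + (-2/(N:ℝ)) * log 2 + (-1/(N:ℝ)) * log π
  + (log (1 - 4/(N:ℝ)) - log (1 - 1/(N:ℝ)) - log (1 - 2/(N:ℝ)))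
  + (2*((1/(N:ℝ)) * log (Stirling.stirlingSeq N)) + log (2*(N:ℝ))/(N:ℝ)
      - (2/(N:ℝ))*log (N:ℝ) - 2)
  + (2/(N:ℝ)) * (log (Real.Gamma (((N:ℝ)+1)/2)) - log (Real.Gamma ((N:ℝ)/2)))

lemma aux_hinv : Tendsto (fun N : ℕ => 1/(N:ℝ)) atTop (𝓝 0) :=
  tendsto_one_div_atTop_nhds_zero_nat

lemma aux_hlogt : Tendsto (fun t : ℝ => log t / t) atTop (𝓝 0) := by
  simpa using Real.tendsto_pow_log_div_mul_add_atTop 1 0 1 one_ne_zero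

lemma aux_hlog_one_sub (a : ℝ) :
    Tendsto (fun N : ℕ => log (1 - a/(N:ℝ))) atTop (𝓝 0) := by
  have h1 : Tendsto (fun N : ℕ => 1 - a/(N:ℝ)) atTop (𝓝 1) := by
    have := (aux_hinv.const_mul a).const_sub 1
    simp only [mul_zero, sub_zero] at this
    refine this.congr (fun N => ?_)
    ring
  have := (Real.continuousAt_log one_ne_zero).tendsto.comp h1
  simpa [Function.comp_def] using this

lemma aux_hstirterm :
    Tendsto (fun N : ℕ => (1/(N:ℝ)) * log (Stirling.stirlingSeq N)) atTop (𝓝 0) := by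
  have hs := Stirling.tendsto_stirlingSeq_sqrt_pi
  have hl := (Real.continuousAt_log (Real.sqrt_pos.mpr Real.pi_pos).ne').tendsto.comp hs
  have := aux_hinv.mul hl
  simpa using this

lemma aux_hlog2x : Tendsto (fun N : ℕ => log (2*(N:ℝ))/(N:ℝ)) atTop (𝓝 0) := by
  have h2x : Tendsto (fun N : ℕ => 2*(N:ℝ)) atTop atTop :=
    Tendsto.const_mul_atTop two_pos tendsto_natCast_atTop_atTop
  have h := aux_hlogt.comp h2x
  have h' := h.const_mul 2
  rw [mul_zero] at h'
  refine h'.congr' ?_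
  filter_upwards [eventually_gt_atTop 0] with N hN
  have hx0 : (0:ℝ) < (N:ℝ) := by exact_mod_cast hN
  show 2 * (log (2*(N:ℝ)) / (2*(N:ℝ))) = log (2*(N:ℝ))/(N:ℝ)
  field_simp

lemma aux_hlogx : Tendsto (fun N : ℕ => (2/(N:ℝ))*log (N:ℝ)) atTop (𝓝 0) := by
  have h := (aux_hlogt.comp tendsto_natCast_atTop_atTop).const_mul 2
  rw [mul_zero] at h
  refine h.congr' ?_
  filter_upwards [eventually_gt_atTop 0] with N hN
  have hx0 : (0:ℝ) < (N:ℝ) := by exact_mod_cast hN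
  show 2 * (log (N:ℝ) / (N:ℝ)) = (2/(N:ℝ))*log (N:ℝ)
  ring

lemma aux_hWterm : Tendsto (fun N : ℕ =>
    (2/(N:ℝ)) * (log (Real.Gamma (((N:ℝ)+1)/2)) - log (Real.Gamma ((N:ℝ)/2))))
    atTop (𝓝 0) := by
  have mono := Real.Gamma_strictMonoOn_Ici.monotoneOn
  refine tendsto_of_tendsto_of_tendsto_of_le_of_le' tendsto_const_nhds aux_hlogx ?_ ?_
  · filter_upwards [eventually_ge_atTop 5] with N hN
    have hx5 : (5:ℝ) ≤ (N:ℝ) := by exact_mod_cast hN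
    have hg3 : 0 < Real.Gamma ((N:ℝ)/2) := Real.Gamma_pos_of_pos (by linarith)
    have hle : Real.Gamma ((N:ℝ)/2) ≤ Real.Gamma (((N:ℝ)+1)/2) :=
      mono (by simp [Set.mem_Ici]; linarith) (by simp [Set.mem_Ici]; linarith) (by linarith)
    have : log (Real.Gamma ((N:ℝ)/2)) ≤ log (Real.Gamma (((N:ℝ)+1)/2)) :=
      (Real.log_le_log_iff hg3 (lt_of_lt_of_le hg3 hle)).mpr hle
    have h2x : (0:ℝ) ≤ 2/(N:ℝ) := by positivity
    nlinarith
  · filter_upwards [eventually_ge_atTop 5] with N hN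
    have hx5' : (5:ℝ) ≤ (N:ℝ) := by exact_mod_cast hN
    set x : ℝ := (N:ℝ) with hxdef
    have hx5 : (5:ℝ) ≤ x := hx5'
    have hg3 : 0 < Real.Gamma (x/2) := Real.Gamma_pos_of_pos (by linarith)
    have hg4 : 0 < Real.Gamma ((x+1)/2) := Real.Gamma_pos_of_pos (by linarith)
    have hrec : Real.Gamma (x/2 + 1) = (x/2) * Real.Gamma (x/2) :=
      Real.Gamma_add_one (ne_of_gt (by linarith))
    have hle : Real.Gamma ((x+1)/2) ≤ Real.Gamma (x/2 + 1) :=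
      mono (by simp [Set.mem_Ici]; linarith) (by simp [Set.mem_Ici]; linarith) (by linarith)
    have hle2 : Real.Gamma ((x+1)/2) ≤ x * Real.Gamma (x/2) := by
      rw [hrec] at hle; nlinarith
    have hlog : log (Real.Gamma ((x+1)/2)) ≤ log x + log (Real.Gamma (x/2)) := by
      rw [← log_mul (by linarith : x ≠ 0) hg3.ne']
      exact (Real.log_le_log_iff hg4 (by nlinarith)).mpr hle2
    have h2x : (0:ℝ) ≤ 2/x := by positivity
    have hdiff : log (Real.Gamma ((x+1)/2)) - log (Real.Gamma (x/2)) ≤ log x := by linarith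
    nlinarith

lemma aux_tendsto_F : Tendsto Ffun atTop (𝓝 (-2 * log π - 2)) := by
  have h1 : Tendsto (fun N : ℕ => (-2/(N:ℝ)) * log 2) atTop (𝓝 0) := by
    have := aux_hinv.const_mul (-2 * log 2)
    rw [mul_zero] at this
    exact this.congr (fun N => by ring)
  have h2 : Tendsto (fun N : ℕ => (-1/(N:ℝ)) * log π) atTop (𝓝 0) := by
    have := aux_hinv.const_mul (-1 * log π)
    rw [mul_zero] at this
    exact this.congr (fun N => by ring)
  have h3 := (aux_hlog_one_sub 4).sub (aux_hlog_one_sub 1)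
  have h3' := h3.sub (aux_hlog_one_sub 2)
  have h4 := ((aux_hstirterm.const_mul 2).add aux_hlog2x).sub aux_hlogx
  have h4' := h4.sub (tendsto_const_nhds (x := (2:ℝ)))
  have hsum := ((((tendsto_const_nhds (x := -2*log π)).add h1).add h2).add h3').add h4'
  have hsum2 := hsum.add aux_hWterm
  have heq : (-2*log π + 0 + 0 + (0 - 0 - 0) + (2*0 + 0 - 0 - 2) + 0) = -2*log π - 2 := by
    ring
  rw [heq] at hsum2
  exact hsum2

lemma aux_M_eq_F {N : ℕ} (hN : 5 ≤ N) : Mfun N = Ffun N := by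
  have hx5 : (5:ℝ) ≤ (N:ℝ) := by exact_mod_cast hN
  set x : ℝ := (N:ℝ) with hxdef
  have hx0 : (0:ℝ) < x := by linarith
  have hl4 : log (1 - 4/x) = log (x-4) - log x := by
    rw [show 1 - 4/x = (x-4)/x by field_simp, log_div (by linarith) hx0.ne']
  have hl1 : log (1 - 1/x) = log (x-1) - log x := by
    rw [show 1 - 1/x = (x-1)/x by field_simp, log_div (by linarith) hx0.ne']
  have hl2 : log (1 - 2/x) = log (x-2) - log x := by
    rw [show 1 - 2/x = (x-2)/x by field_simp, log_div (by linarith) hx0.ne']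
  have hN1 : 1 ≤ N := by omega
  have hcast : ((N-1 : ℕ) : ℝ) = x - 1 := by
    rw [hxdef]; push_cast [Nat.cast_sub hN1]; ring
  have hGl : log (Real.Gamma x) = log ((Nat.factorial (N-1) : ℕ) : ℝ) := by
    have h := Real.Gamma_nat_eq_factorial (N-1)
    rw [hcast, show x - 1 + 1 = x by ring] at h
    rw [h]
  have hfactpos : (0:ℝ) < ((Nat.factorial (N-1) : ℕ) : ℝ) := by positivity
  have hfact : log ((Nat.factorial N : ℕ) : ℝ) =
      log x + log ((Nat.factorial (N-1) : ℕ) : ℝ) := by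
    have h : Nat.factorial N = N * Nat.factorial (N-1) := by
      conv_lhs => rw [show N = (N-1)+1 by omega]
      rw [Nat.factorial_succ]; congr 1; omega
    rw [h, Nat.cast_mul, log_mul hx0.ne' hfactpos.ne']
  have hstir := Stirling.log_stirlingSeq_formula N
  have hlogdiv : log (x / Real.exp 1) = log x - 1 := by
    rw [log_div hx0.ne' (exp_ne_zero 1), Real.log_exp]
  have hGlog : log (Real.Gamma x) = log (Stirling.stirlingSeq N)
      + (1/2) * log (2*x) + x * (log x - 1) - log x := by
    linear_combination hGl - hfact - hstir + x * hlogdiv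
  have claimV : (2/x) * log (Real.Gamma x) - 2 * log x =
      2*((1/x) * log (Stirling.stirlingSeq N)) + log (2*x)/x - (2/x)*log x - 2 := by
    rw [hGlog]; field_simp; ring
  unfold Mfun Ffun
  rw [← hxdef]
  linear_combination -hl4 + hl1 + hl2 + claimV

end Aux

section Aux2
open Topology

lemma aux_Rquant_pos {N : ℕ} (hN : 5 ≤ N) : 0 < Rquant N := by
  have hx5 : (5:ℝ) ≤ (N:ℝ) := by exact_mod_cast hN
  have hg1 : 0 < Real.Gamma ((N:ℝ) - 2) := Real.Gamma_pos_of_pos (by linarith)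
  have hg2 : 0 < Real.Gamma (N:ℝ) := Real.Gamma_pos_of_pos (by linarith)
  have hg3 : 0 < Real.Gamma ((N:ℝ)/2) := Real.Gamma_pos_of_pos (by linarith)
  have hg4 : 0 < Real.Gamma (((N:ℝ)+1)/2) := Real.Gamma_pos_of_pos (by linarith)
  have hg5 : 0 < Real.Gamma ((N:ℝ)/2 - 2) := Real.Gamma_pos_of_pos (by linarith)
  unfold Rquant
  exact div_pos
    (mul_pos (mul_pos (mul_pos (mul_pos (rpow_pos_of_pos two_pos _)
      (rpow_pos_of_pos pi_pos _)) hg1) (rpow_pos_of_pos (div_pos hg2 hg3) _))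
      (rpow_pos_of_pos hg4 _))
    (mul_pos (mul_pos (by linarith) (by linarith)) hg5)

lemma aux_log_Rquant {N : ℕ} (hN : 5 ≤ N) : log (Rquant N) = Mfun N := by
  have hx5 : (5:ℝ) ≤ (N:ℝ) := by exact_mod_cast hN
  set x : ℝ := (N:ℝ) with hxdef
  have hx0 : (0:ℝ) < x := by linarith
  have hg1 : 0 < Real.Gamma (x - 2) := Real.Gamma_pos_of_pos (by linarith)
  have hg2 : 0 < Real.Gamma x := Real.Gamma_pos_of_pos (by linarith)
  have hg3 : 0 < Real.Gamma (x/2) := Real.Gamma_pos_of_pos (by linarith)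
  have hg4 : 0 < Real.Gamma ((x+1)/2) := Real.Gamma_pos_of_pos (by linarith)
  have hg5 : 0 < Real.Gamma (x/2 - 2) := Real.Gamma_pos_of_pos (by linarith)
  have hg6 : 0 < Real.Gamma (x/2 - 1) := Real.Gamma_pos_of_pos (by linarith)
  have hg7 : 0 < Real.Gamma ((x-1)/2) := Real.Gamma_pos_of_pos (by linarith)
  have hp1 : 0 < (2:ℝ) ^ (3 - 2/x - x) := rpow_pos_of_pos two_pos _
  have hp2 : 0 < π ^ (-(3:ℝ)/2 - 1/x) := rpow_pos_of_pos pi_pos _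
  have hp4 : 0 < (Real.Gamma x / Real.Gamma (x/2)) ^ ((2:ℝ)/x) :=
    rpow_pos_of_pos (div_pos hg2 hg3) _
  have hp5 : 0 < Real.Gamma ((x+1)/2) ^ (-1 + (2:ℝ)/x) := rpow_pos_of_pos hg4 _
  have h0 : log (Rquant N) =
      (3 - 2/x - x) * log 2 + (-(3:ℝ)/2 - 1/x) * log π + log (Real.Gamma (x-2))
      + (2/x) * (log (Real.Gamma x) - log (Real.Gamma (x/2)))
      + (-1 + 2/x) * log (Real.Gamma ((x+1)/2))
      - (log x + log (x-2) + log (Real.Gamma (x/2-2))) := by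
    unfold Rquant
    rw [← hxdef]
    rw [log_div (by positivity) (ne_of_gt (mul_pos (mul_pos hx0 (by linarith)) hg5))]
    rw [log_mul (by positivity) hp5.ne', log_mul (by positivity) hp4.ne',
        log_mul (by positivity) hg1.ne', log_mul hp1.ne' hp2.ne',
        log_mul (ne_of_gt (mul_pos hx0 (by linarith))) hg5.ne',
        log_mul hx0.ne' (by linarith)]
    rw [log_rpow two_pos, log_rpow pi_pos, log_rpow (div_pos hg2 hg3),
        log_rpow hg4, log_div hg2.ne' hg3.ne']
  have e1 : log (Real.Gamma (x-2)) =
      (log (x-4) - log 2) + log (Real.Gamma (x/2-2)) + log (Real.Gamma ((x-1)/2))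
      + (x-3) * log 2 - log π / 2 := by
    have hd := Real.Gamma_mul_Gamma_add_half (x/2 - 1)
    rw [show x/2 - 1 + 1/2 = (x-1)/2 by ring, show 2 * (x/2 - 1) = x - 2 by ring] at hd
    have hrec : Real.Gamma (x/2 - 1) = (x/2 - 2) * Real.Gamma (x/2 - 2) := by
      have h := Real.Gamma_add_one (s := x/2 - 2) (ne_of_gt (by linarith))
      rw [show x/2 - 2 + 1 = x/2 - 1 by ring] at h
      exact h
    have hthis := congrArg Real.log hd
    rw [log_mul hg6.ne' hg7.ne', log_mul (ne_of_gt (mul_pos hg1 (rpow_pos_of_pos two_pos _)))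
        (ne_of_gt (sqrt_pos.mpr pi_pos)),
        log_mul hg1.ne' (ne_of_gt (rpow_pos_of_pos two_pos _)),
        log_rpow two_pos, log_sqrt pi_pos.le,
        hrec, log_mul (ne_of_gt (by linarith : (0:ℝ) < x/2 - 2)) hg5.ne'] at hthis
    have hl : log (x/2 - 2) = log (x-4) - log 2 := by
      rw [show x/2 - 2 = (x-4)/2 by ring, log_div (by linarith) two_ne_zero]
    linear_combination hl - hthis
  have e2 : log (Real.Gamma x) =
      log (Real.Gamma (x/2)) + log (Real.Gamma ((x+1)/2)) + (x-1) * log 2 - log π / 2 := by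
    have hd := Real.Gamma_mul_Gamma_add_half (x/2)
    rw [show x/2 + 1/2 = (x+1)/2 by ring, show 2 * (x/2) = x by ring] at hd
    have hthis := congrArg Real.log hd
    rw [log_mul hg3.ne' hg4.ne', log_mul (ne_of_gt (mul_pos hg2 (rpow_pos_of_pos two_pos _)))
        (ne_of_gt (sqrt_pos.mpr pi_pos)),
        log_mul hg2.ne' (ne_of_gt (rpow_pos_of_pos two_pos _)),
        log_rpow two_pos, log_sqrt pi_pos.le] at hthis
    linear_combination -hthis
  have e3 : log (Real.Gamma ((x+1)/2)) =
      (log (x-1) - log 2) + log (Real.Gamma ((x-1)/2)) := by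
    have h := Real.Gamma_add_one (s := (x-1)/2) (ne_of_gt (by linarith))
    rw [show (x-1)/2 + 1 = (x+1)/2 by ring] at h
    rw [h, log_mul (ne_of_gt (by linarith : (0:ℝ) < (x-1)/2)) hg7.ne',
        log_div (by linarith) two_ne_zero]
  rw [h0, e1, e3]
  unfold Mfun
  rw [← hxdef, e2, e3]
  field_simp
  ring

end Aux2

/-- `R(N) → 1/(π²e²)` as `N → ∞`. -/
theorem stmt_17 :
    Tendsto Rquant atTop (nhds (1 / (π ^ 2 * Real.exp 1 ^ 2))) := by
  have hM : Tendsto Mfun atTop (nhds (-2 * log π - 2)) := by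
    refine aux_tendsto_F.congr' ?_
    filter_upwards [eventually_ge_atTop 5] with N hN
    exact (aux_M_eq_F hN).symm
  have hexp : Tendsto (fun N => Real.exp (Mfun N)) atTop
      (nhds (Real.exp (-2 * log π - 2))) :=
    (Real.continuous_exp.tendsto _).comp hM
  have hval : Real.exp (-2 * log π - 2) = 1 / (π ^ 2 * Real.exp 1 ^ 2) := by
    rw [show -2*log π - 2 = -(log π + log π + 1 + 1) by ring]
    rw [Real.exp_neg, Real.exp_add, Real.exp_add, Real.exp_add, Real.exp_log pi_pos]
    rw [one_div]
    congr 1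
    ring
  rw [← hval]
  refine hexp.congr' ?_
  filter_upwards [eventually_ge_atTop 5] with N hN
  rw [← aux_log_Rquant hN, Real.exp_log (aux_Rquant_pos hN)]
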